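/- The first-order perturbation of a Hamiltonian operator is Hamiltonian: if J : V → End(V) is smooth, each J(u) skew-symmetric with respect to a pairing, and J satisfies the Jacobi-type identity ⟨α, J'(u)[J(u)β]γ⟩ + cyclic(α,β,γ) = 0, then the block operator Ĵ(η_0,η_1) = [[0, J(η_0)],[J(η_0), J'(η_0)[η_1]]] on V × V is skew-symmetric and satisfies the same Jacobi-type identity with the product pairing. -/

import Mathlib

open RealInnerProductSpace

variable {E : Type*} [NormedAddCommGroup E] [InnerProductSpace ℝ E]

/-- The product pairing on `E × E`: `⟨(a,b),(c,d)⟩ = ⟨a,c⟩ + ⟨b,d⟩`. -/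
noncomputable def pairing (p q : E × E) : ℝ := ⟪p.1, q.1⟫ + ⟪p.2, q.2⟫

/-- The first-order perturbation operator
`Ĵ(η₀,η₁) = [[0, J(η₀)], [J(η₀), J'(η₀)[η₁]]]` on `E × E`. -/
noncomputable def jHat (J : E → E →L[ℝ] E) (η : E × E) :
    (E × E) →L[ℝ] (E × E) :=
  ((J η.1).comp (ContinuousLinearMap.snd ℝ E E)).prod
    ((J η.1).comp (ContinuousLinearMap.fst ℝ E E) +
      (fderiv ℝ J η.1 η.2).comp (ContinuousLinearMap.snd ℝ E E))

section Aux

open ContinuousLinearMap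

/-- `ContinuousLinearMap.prod` as a continuous linear map. -/
noncomputable def prodCLM (M N P : Type*)
    [NormedAddCommGroup M] [NormedSpace ℝ M] [NormedAddCommGroup N] [NormedSpace ℝ N]
    [NormedAddCommGroup P] [NormedSpace ℝ P] :
    ((M →L[ℝ] N) × (M →L[ℝ] P)) →L[ℝ] (M →L[ℝ] N × P) :=
  (ContinuousLinearMap.prodₗᵢ ℝ).toLinearIsometry.toContinuousLinearMap

@[simp] theorem prodCLM_apply {M N P : Type*}
    [NormedAddCommGroup M] [NormedSpace ℝ M] [NormedAddCommGroup N] [NormedSpace ℝ N]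
    [NormedAddCommGroup P] [NormedSpace ℝ P] (f : (M →L[ℝ] N) × (M →L[ℝ] P)) :
    prodCLM M N P f = f.1.prod f.2 := rfl

theorem myclm_prod {X M N P : Type*} [NormedAddCommGroup X] [NormedSpace ℝ X]
    [NormedAddCommGroup M] [NormedSpace ℝ M] [NormedAddCommGroup N] [NormedSpace ℝ N]
    [NormedAddCommGroup P] [NormedSpace ℝ P]
    {c : X → M →L[ℝ] N} {d : X → M →L[ℝ] P} {c' : X →L[ℝ] M →L[ℝ] N}
    {d' : X →L[ℝ] M →L[ℝ] P} {x : X} (hc : HasFDerivAt c c' x) (hd : HasFDerivAt d d' x) :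
    HasFDerivAt (fun y => (c y).prod (d y)) ((prodCLM M N P).comp (c'.prod d')) x :=
  (prodCLM M N P).hasFDerivAt.comp x (hc.prodMk hd)

/-- Explicit formula for the derivative of `jHat`. -/
theorem jHat_fderiv (J : E → E →L[ℝ] E) (hJ : ContDiff ℝ (⊤ : ℕ∞) J) (η v c : E × E) :
    fderiv ℝ (jHat J) η v c =
      (fderiv ℝ J η.1 v.1 c.2,
       fderiv ℝ J η.1 v.1 c.1 + fderiv ℝ (fderiv ℝ J) η.1 v.1 η.2 c.2
         + fderiv ℝ J η.1 v.2 c.2) := by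
  set F := fderiv ℝ J with hFdef
  set G := fderiv ℝ F with hGdef
  have hJd : ∀ u, HasFDerivAt J (F u) u := fun u =>
    ((hJ.differentiable (by simp)) u).hasFDerivAt
  have hFcd : ContDiff ℝ (⊤ : ℕ∞) F := hJ.fderiv_right (by simp)
  have hFd : ∀ u, HasFDerivAt F (G u) u := fun u =>
    ((hFcd.differentiable (by simp)) u).hasFDerivAt
  have h1 : HasFDerivAt (fun η : E × E => J η.1) ((F η.1).comp (fst ℝ E E)) η :=
    (hJd η.1).comp η hasFDerivAt_fst
  have h2 : HasFDerivAt (fun η : E × E => F η.1) ((G η.1).comp (fst ℝ E E)) η :=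
    HasFDerivAt.comp (g := F) (f := Prod.fst) η (hFd η.1) (hasFDerivAt_fst (𝕜 := ℝ) (p := η))
  have h3 := h2.clm_apply hasFDerivAt_snd
  have hc := h1.clm_comp (hasFDerivAt_const (snd ℝ E E) η)
  have hd := (h1.clm_comp (hasFDerivAt_const (fst ℝ E E) η)).add
    (h3.clm_comp (hasFDerivAt_const (snd ℝ E E) η))
  have H : HasFDerivAt (jHat J) _ η := myclm_prod hc hd
  rw [H.fderiv]
  simp only [prodCLM_apply, ContinuousLinearMap.comp_apply, ContinuousLinearMap.flip_apply,
    ContinuousLinearMap.add_apply, ContinuousLinearMap.prod_apply, ContinuousLinearMap.zero_apply,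
    ContinuousLinearMap.compL_apply, ContinuousLinearMap.coe_fst', ContinuousLinearMap.coe_snd',
    map_zero, zero_add, add_zero, Prod.mk.injEq]
  exact ⟨trivial, by abel⟩

theorem inner_deriv {X : Type*} [NormedAddCommGroup X] [NormedSpace ℝ X]
    (x : E) {c : X → E} {c' : X →L[ℝ] E} {p : X} (h : HasFDerivAt c c' p) :
    HasFDerivAt (fun q => ⟪x, c q⟫) ((innerSL ℝ x).comp c') p :=
  (innerSL ℝ x).hasFDerivAt.comp p h

end Aux

/-- the first-order perturbation of a Hamiltonian operator is
Hamiltonian: `Ĵ` is skew-symmetric and satisfies the Jacobi-type identity with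
respect to the product pairing. -/
theorem stmt11 (J : E → E →L[ℝ] E) (hJ : ContDiff ℝ (⊤ : ℕ∞) J)
    (hskew : ∀ (u a b : E), ⟪J u a, b⟫ = - ⟪a, J u b⟫)
    (hham : ∀ (u a b c : E),
      ⟪a, fderiv ℝ J u (J u b) c⟫ + ⟪b, fderiv ℝ J u (J u c) a⟫ +
        ⟪c, fderiv ℝ J u (J u a) b⟫ = 0) :
    (∀ (η p q : E × E), pairing (jHat J η p) q = - pairing p (jHat J η q)) ∧
    (∀ (η a b c : E × E),
      pairing a (fderiv ℝ (jHat J) η (jHat J η b) c) +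
        pairing b (fderiv ℝ (jHat J) η (jHat J η c) a) +
        pairing c (fderiv ℝ (jHat J) η (jHat J η a) b) = 0) := by
  classical
  set F := fderiv ℝ J with hFdef
  set G := fderiv ℝ F with hGdef
  have hJd : ∀ u, HasFDerivAt J (F u) u := fun u =>
    ((hJ.differentiable (by simp)) u).hasFDerivAt
  have hFcd : ContDiff ℝ (⊤ : ℕ∞) F := hJ.fderiv_right (by simp)
  have hFd : ∀ u, HasFDerivAt F (G u) u := fun u =>
    ((hFcd.differentiable (by simp)) u).hasFDerivAt
  have Gsymm : ∀ u v w, G u v w = G u w v := fun u =>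
    second_derivative_symmetric hJd (hFd u)
  -- J a at u has derivative (apply a) ∘ F u
  have happ : ∀ (a u : E), HasFDerivAt (fun u => J u a)
      ((ContinuousLinearMap.apply ℝ E a).comp (F u)) u := fun a u =>
    (ContinuousLinearMap.apply ℝ E a).hasFDerivAt.comp u (hJd u)
  -- skewness of the derivative of J
  have Fskew : ∀ (u w a b : E), ⟪F u w a, b⟫ = - ⟪a, F u w b⟫ := by
    intro u w a b
    have hfun : (fun u : E => ⟪b, J u a⟫ + ⟪a, J u b⟫) = fun _ => (0 : ℝ) := by
      funext u
      linarith [real_inner_comm b (J u a), hskew u a b]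
    have d1 := (inner_deriv b (happ a u)).add (inner_deriv a (happ b u))
    simp only [Pi.add_def] at d1
    rw [hfun] at d1
    have h0 := d1.unique (hasFDerivAt_const 0 u)
    have := congrArg (fun T => T w) h0
    simp only [ContinuousLinearMap.add_apply, ContinuousLinearMap.comp_apply,
      ContinuousLinearMap.apply_apply, innerSL_apply_apply, ContinuousLinearMap.zero_apply] at this
    linarith [real_inner_comm (F u w a) b]
  -- derivative of the Hamiltonian identity
  have dterm : ∀ (x y z u : E), HasFDerivAt (fun u => ⟪x, F u (J u y) z⟫)
      ((innerSL ℝ x).comp ((ContinuousLinearMap.apply ℝ E z).comp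
        ((F u).comp ((ContinuousLinearMap.apply ℝ E y).comp (F u))
          + (G u).flip (J u y)))) u := by
    intro x y z u
    exact inner_deriv x ((ContinuousLinearMap.apply ℝ E z).hasFDerivAt.comp u
      ((hFd u).clm_apply (happ y u)))
  have Fham : ∀ (u w x y z : E),
      ⟪x, G u w (J u y) z⟫ + ⟪x, F u (F u w y) z⟫ +
      ⟪y, G u w (J u z) x⟫ + ⟪y, F u (F u w z) x⟫ +
      ⟪z, G u w (J u x) y⟫ + ⟪z, F u (F u w x) y⟫ = 0 := by
    intro u w x y z
    have hfun : (fun u : E => ⟪x, F u (J u y) z⟫ + ⟪y, F u (J u z) x⟫ +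
        ⟪z, F u (J u x) y⟫) = fun _ => (0 : ℝ) := by
      funext u; exact hham u x y z
    have d1 := ((dterm x y z u).add (dterm y z x u)).add (dterm z x y u)
    simp only [Pi.add_def] at d1
    rw [hfun] at d1
    have h0 := d1.unique (hasFDerivAt_const 0 u)
    have := congrArg (fun T => T w) h0
    simp only [ContinuousLinearMap.add_apply, ContinuousLinearMap.comp_apply,
      ContinuousLinearMap.apply_apply, innerSL_apply_apply, ContinuousLinearMap.zero_apply,
      ContinuousLinearMap.flip_apply, inner_add_right] at this
    linarith
  constructor
  · intro η p q
    simp only [pairing, jHat, ContinuousLinearMap.prod_apply, ContinuousLinearMap.comp_apply,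
      ContinuousLinearMap.add_apply, ContinuousLinearMap.coe_fst', ContinuousLinearMap.coe_snd',
      inner_add_left, inner_add_right, ← hFdef]
    linarith [hskew η.1 p.2 q.1, hskew η.1 p.1 q.2, Fskew η.1 η.2 p.2 q.2]
  · intro η a b c
    have hv : ∀ p : E × E, jHat J η p = (J η.1 p.2, J η.1 p.1 + F η.1 η.2 p.2) := by
      intro p
      simp [jHat, ← hFdef]
    have key : ∀ v c : E × E, fderiv ℝ (jHat J) η v c =
        (F η.1 v.1 c.2, F η.1 v.1 c.1 + G η.1 v.1 η.2 c.2 + F η.1 v.2 c.2) := by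
      intro v c
      rw [jHat_fderiv J hJ, ← hFdef, ← hGdef]
    rw [key (jHat J η b) c, key (jHat J η c) a, key (jHat J η a) b, hv a, hv b, hv c]
    simp only [pairing, map_add, inner_add_right, ContinuousLinearMap.add_apply]
    have e1 := congrArg (fun T : E →L[ℝ] E => ⟪a.2, T c.2⟫) (Gsymm η.1 (J η.1 b.2) η.2)
    have e2 := congrArg (fun T : E →L[ℝ] E => ⟪b.2, T a.2⟫) (Gsymm η.1 (J η.1 c.2) η.2)
    have e3 := congrArg (fun T : E →L[ℝ] E => ⟪c.2, T b.2⟫) (Gsymm η.1 (J η.1 a.2) η.2)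
    linarith [hham η.1 a.1 b.2 c.2, hham η.1 a.2 b.2 c.1, hham η.1 a.2 b.1 c.2,
      Fham η.1 η.2 a.2 b.2 c.2]
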